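/- In ℙ𝕊², every open neighborhood of the class z₀₀ = [((0,∞),(0,∞))] of the lattice point ((0,∞),(0,∞)) contains the class [((0,s),(0,t))] for all s, t ∈ (0,∞) and also the class [((1,s),(1,t))] for all s, t ∈ (0,∞). -/

import Mathlib

/-! In the order topology of `𝕊`, the point `(0,∞)` has no immediate neighbours: the points
`(0,r)` converge to it from below as `r → ∞`, and the points `(1,r)` from above as `r → 0`.
Hence `λ·((0,s),(0,t)) → ((0,∞),(0,∞))` as `λ → ∞` and `λ·((1,s),(1,t)) → ((0,∞),(0,∞))` as
`λ → 0`, so every open `U ∋ z₀₀` contains some rescaling, hence the class, of either point. -/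

open scoped ENNReal

/-- The parameter space `𝕊 = {0} ∪ (ℕ₀ × (0,∞])`, realized as a subtype of the
lexicographic product `ℕ ×ₗ ℝ≥0∞`: the pair `(0,0)` represents `0 ∈ 𝕊`, and the pairs
`(i,t)` with `t > 0` represent the elements of `ℕ₀ × (0,∞]`.  The induced subtype
order is exactly the order of the paper: `0` is the least element, and
`(i,t) < (j,s)` iff `i < j`, or `i = j` and `t < s`. -/
abbrev Sp : Type :=
  {p : ℕ ×ₗ ℝ≥0∞ // ((ofLex p).1 = 0 ∧ (ofLex p).2 = 0) ∨ 0 < (ofLex p).2}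

/-- The zero element of `𝕊`. -/
def sZero : Sp := ⟨toLex (0, 0), Or.inl ⟨rfl, rfl⟩⟩

/-- The element `(i,t)` of `𝕊`, for a level `i ∈ ℕ₀` and real part `t ∈ (0,∞]`. -/
def sNode (i : ℕ) (t : ℝ≥0∞) (ht : 0 < t) : Sp := ⟨toLex (i, t), Or.inr ht⟩

/-- The level `ℒ(x)` of an element of `𝕊` (conventionally `0` on the zero element). -/
def sLevel (x : Sp) : ℕ := (ofLex x.val).1

/-- The real part `ℛ(x)` of an element of `𝕊` (equal to `0` exactly on the zero element). -/
def sRe (x : Sp) : ℝ≥0∞ := (ofLex x.val).2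

theorem sNode_ne_sZero {i : ℕ} {t : ℝ≥0∞} (ht : 0 < t) : sNode i t ht ≠ sZero :=
  fun h => ht.ne' (congrArg sRe h)

/-- Scalar multiplication by an extended real `λ`: `λ·(i,t) = (i, λ·t)` and `λ·0 = 0`
(intended for positive scalars `λ ∈ (0,∞]`). -/
noncomputable def sSMul (l : ℝ≥0∞) (x : Sp) : Sp :=
  if hx : sRe x = 0 then sZero
  else if hl : l = 0 then sZero
  else sNode (sLevel x) (l * sRe x) (ENNReal.mul_pos hl hx)

/-- `𝕊` carries the order topology. -/
instance : TopologicalSpace Sp := Preorder.topology Sp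

instance : OrderTopology Sp := ⟨rfl⟩

/-- `𝕊² ∖ {(0,0)}`. -/
abbrev SV2 : Type := {v : Sp × Sp // v ≠ (sZero, sZero)}

/-- Projective equivalence on `𝕊² ∖ {(0,0)}`: `w = λ·v` coordinatewise for some real
`λ ∈ (0,∞)` (i.e. some positive finite extended real). -/
def projRel2 (v w : SV2) : Prop :=
  ∃ l : ℝ≥0∞, 0 < l ∧ l ≠ ∞ ∧
    w.val.1 = sSMul l v.val.1 ∧ w.val.2 = sSMul l v.val.2

/-- The projectivization `ℙ𝕊²`, with the quotient topology. -/
abbrev PS2 : Type := Quot projRel2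

/-- The point `((i,s),(j,t))` of `𝕊² ∖ {(0,0)}`. -/
def pt2 (i j : ℕ) (s t : ℝ≥0∞) (hs : 0 < s) (ht : 0 < t) : SV2 :=
  ⟨(sNode i s hs, sNode j t ht), fun h => sNode_ne_sZero hs (congrArg Prod.fst h)⟩

/-- The lattice point `((0,∞),(0,∞)) ∈ 𝕊²`. -/
noncomputable def z00 : SV2 := pt2 0 0 ∞ ∞ (by simp) (by simp)

open Filter Topology

local notation "ω₀" => sNode 0 ∞ ENNReal.zero_lt_top

lemma sp_lt_iff (x y : Sp) :
    x < y ↔ sLevel x < sLevel y ∨ sLevel x = sLevel y ∧ sRe x < sRe y := by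
  rw [← Subtype.coe_lt_coe]
  exact Prod.Lex.lt_iff

lemma sRe_pos_of_sLevel_ne_zero {x : Sp} (hx : sLevel x ≠ 0) : 0 < sRe x :=
  x.2.resolve_left fun h => hx h.1

lemma lt_sNode_zero_top_iff (x : Sp) : x < ω₀ ↔ sLevel x = 0 ∧ sRe x < ∞ := by
  simp [sp_lt_iff, sLevel, sRe, sNode]

lemma sNode_zero_top_lt_iff (x : Sp) : ω₀ < x ↔ 0 < sLevel x := by
  simp [sp_lt_iff, sLevel, sRe, sNode]

lemma tendsto_sNode_zero_of_tendsto_top {α : Type*} {l : Filter α} {r : α → ℝ≥0∞}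
    (hr : ∀ a, 0 < r a) (h : Tendsto r l (𝓝 ∞)) :
    Tendsto (fun a => sNode 0 (r a) (hr a)) l (𝓝 ω₀) := by
  refine tendsto_order.2 ⟨fun x hx => ?_, fun x hx => ?_⟩
  · obtain ⟨hx0, hx⟩ := (lt_sNode_zero_top_iff x).1 hx
    filter_upwards [h.eventually (lt_mem_nhds hx)] with a ha
    exact (sp_lt_iff _ _).2 (Or.inr ⟨hx0, ha⟩)
  · exact Eventually.of_forall fun a =>
      (sp_lt_iff _ _).2 (Or.inl ((sNode_zero_top_lt_iff x).1 hx))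

lemma tendsto_sNode_one_of_tendsto_zero {α : Type*} {l : Filter α} {r : α → ℝ≥0∞}
    (hr : ∀ a, 0 < r a) (h : Tendsto r l (𝓝 0)) :
    Tendsto (fun a => sNode 1 (r a) (hr a)) l (𝓝 ω₀) := by
  refine tendsto_order.2 ⟨fun x hx => ?_, fun x hx => ?_⟩
  · obtain ⟨hx0, -⟩ := (lt_sNode_zero_top_iff x).1 hx
    exact Eventually.of_forall fun a => (sp_lt_iff _ _).2 (Or.inl (hx0.trans_lt Nat.one_pos))
  · have hx1 := (sNode_zero_top_lt_iff x).1 hx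
    rcases (Nat.one_le_iff_ne_zero.2 hx1.ne').eq_or_lt with hx1 | hx1
    · have hx_pos : 0 < sRe x := sRe_pos_of_sLevel_ne_zero (hx1 ▸ one_ne_zero)
      filter_upwards [h.eventually (gt_mem_nhds hx_pos)] with a ha
      exact (sp_lt_iff _ _).2 (Or.inr ⟨hx1, ha⟩)
    · exact Eventually.of_forall fun a => (sp_lt_iff _ _).2 (Or.inl hx1)

lemma sSMul_sNode {c : ℝ≥0∞} (hc : c ≠ 0) (i : ℕ) {t : ℝ≥0∞} (ht : 0 < t) :
    sSMul c (sNode i t ht) = sNode i (c * t) (ENNReal.mul_pos hc ht.ne') := by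
  simp [sSMul, sRe, sNode, sLevel, ht.ne', hc]

lemma mk_pt2_eq_mk_pt2_mul {i j : ℕ} {s t c : ℝ≥0∞} (hs : 0 < s) (ht : 0 < t) (hc : 0 < c)
    (hc' : c ≠ ∞) :
    Quot.mk projRel2 (pt2 i j s t hs ht) =
      Quot.mk projRel2 (pt2 i j (c * s) (c * t) (ENNReal.mul_pos hc.ne' hs.ne')
        (ENNReal.mul_pos hc.ne' ht.ne')) :=
  Quot.sound ⟨c, hc, hc', (sSMul_sNode hc.ne' i hs).symm, (sSMul_sNode hc.ne' j ht).symm⟩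

lemma tendsto_mk_pt2 {α : Type*} {l : Filter α} {i j : ℕ} {s t : α → ℝ≥0∞}
    (hs : ∀ a, 0 < s a) (ht : ∀ a, 0 < t a)
    (h₁ : Tendsto (fun a => sNode i (s a) (hs a)) l (𝓝 ω₀))
    (h₂ : Tendsto (fun a => sNode j (t a) (ht a)) l (𝓝 ω₀)) :
    Tendsto (fun a => Quot.mk projRel2 (pt2 i j (s a) (t a) (hs a) (ht a))) l
      (𝓝 (Quot.mk projRel2 z00)) :=
  continuous_quot_mk.continuousAt.tendsto.comp (tendsto_subtype_rng.2 (h₁.prodMk_nhds h₂))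

lemma mk_pt2_mem_of_tendsto_mul {U : Set PS2} (hU : U ∈ 𝓝 (Quot.mk projRel2 z00))
    {α : Type*} {l : Filter α} [l.NeBot] {i : ℕ} {s t : ℝ≥0∞} (hs : 0 < s) (ht : 0 < t)
    {c : α → ℝ≥0∞} (hc : ∀ a, 0 < c a) (hc' : ∀ a, c a ≠ ∞)
    (h₁ : Tendsto (fun a => sNode i (c a * s) (ENNReal.mul_pos (hc a).ne' hs.ne')) l (𝓝 ω₀))
    (h₂ : Tendsto (fun a => sNode i (c a * t) (ENNReal.mul_pos (hc a).ne' ht.ne')) l (𝓝 ω₀)) :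
    Quot.mk projRel2 (pt2 i i s t hs ht) ∈ U := by
  obtain ⟨a, ha⟩ := ((tendsto_mk_pt2 _ _ h₁ h₂).eventually hU).exists
  rwa [mk_pt2_eq_mk_pt2_mul hs ht (hc a) (hc' a)]

lemma tendsto_nat_add_one_mul_top {s : ℝ≥0∞} (hs : s ≠ 0) :
    Tendsto (fun n : ℕ => ((n : ℝ≥0∞) + 1) * s) atTop (𝓝 ∞) := by
  have h := ENNReal.Tendsto.mul_const (b := s)
    (ENNReal.tendsto_nat_nhds_top.comp (tendsto_add_atTop_nat 1)) (Or.inl ENNReal.top_ne_zero)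
  simpa [Function.comp_def, ENNReal.top_mul hs] using h

lemma tendsto_inv_nat_add_one_mul_zero {s : ℝ≥0∞} (hs : s ≠ ∞) :
    Tendsto (fun n : ℕ => ((n : ℝ≥0∞) + 1)⁻¹ * s) atTop (𝓝 0) := by
  have h := ENNReal.Tendsto.mul_const (b := s)
    (ENNReal.tendsto_inv_nat_nhds_zero.comp (tendsto_add_atTop_nat 1)) (Or.inr hs)
  simpa [Function.comp_def] using h

/-- In `ℙ𝕊²`, every open neighborhood of the class `z₀₀ = [((0,∞),(0,∞))]` contains
the class `[((0,s),(0,t))]` for all `s, t ∈ (0,∞)` and the class `[((1,s),(1,t))]`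
for all `s, t ∈ (0,∞)`. -/
theorem stmt14 (U : Set PS2) (hU : IsOpen U) (hz : Quot.mk projRel2 z00 ∈ U) :
    (∀ s t : ℝ≥0∞, ∀ hs : 0 < s, s ≠ ∞ → ∀ ht : 0 < t, t ≠ ∞ →
      Quot.mk projRel2 (pt2 0 0 s t hs ht) ∈ U) ∧
    (∀ s t : ℝ≥0∞, ∀ hs : 0 < s, s ≠ ∞ → ∀ ht : 0 < t, t ≠ ∞ →
      Quot.mk projRel2 (pt2 1 1 s t hs ht) ∈ U) := by
  have hUz : U ∈ 𝓝 (Quot.mk projRel2 z00) := hU.mem_nhds hz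
  have hpos : ∀ n : ℕ, 0 < (n : ℝ≥0∞) + 1 := fun n => by positivity
  have hfin : ∀ n : ℕ, (n : ℝ≥0∞) + 1 ≠ ∞ := fun n => by simp
  refine ⟨fun s t hs _ ht _ => ?_, fun s t hs hs' ht ht' => ?_⟩
  · exact mk_pt2_mem_of_tendsto_mul hUz hs ht hpos hfin
      (tendsto_sNode_zero_of_tendsto_top _ (tendsto_nat_add_one_mul_top hs.ne'))
      (tendsto_sNode_zero_of_tendsto_top _ (tendsto_nat_add_one_mul_top ht.ne'))
  · exact mk_pt2_mem_of_tendsto_mul hUz hs ht (fun n => ENNReal.inv_pos.2 (hfin n))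
      (fun n => ENNReal.inv_ne_top.2 (hpos n).ne')
      (tendsto_sNode_one_of_tendsto_zero _ (tendsto_inv_nat_add_one_mul_zero hs'))
      (tendsto_sNode_one_of_tendsto_zero _ (tendsto_inv_nat_add_one_mul_zero ht'))
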